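/- arXiv:2102.00090 — 4 statements merged into one kernel-verified Lean document; each statement's English description precedes it below -/
import Mathlib

section
/- If f ∈ 𝔚ₙ, then f^{(k)} ∈ L¹(ℝ) and the Fourier transform of f^{(k)} is in L¹(ℝ) for every k = 1, …, n. -/
open MeasureTheory Filter Asymptotics
open scoped FourierTransform

/-- Membership in the class `𝔚ₙ`. -/
def MemW (n : ℕ) (f : ℝ → ℂ) : Prop :=
  ContDiff ℝ n f ∧
  Tendsto f (cocompact ℝ) (nhds 0) ∧
  (iteratedDeriv n f) =o[cocompact ℝ] (fun x : ℝ => |x| ^ (-(n : ℝ))) ∧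
  (∀ k : ℕ, 1 ≤ k → k ≤ n →
    Integrable (fun x : ℝ => (1 + |x|) ^ (k - 1) * ‖iteratedDeriv k f x‖)
      (volume : Measure ℝ)) ∧
  Integrable (𝓕 (iteratedDeriv n f)) (volume : Measure ℝ)

/-
The weights `(1 + |x|)^(k-1)` are at least `1`, so each `f⁽ᵏ⁾` is integrable.
Integrability of `f⁽ᵏ⁾, …, f⁽ⁿ⁾` lets one integrate by parts `n - k` times, giving
`𝓕 f⁽ⁿ⁾ ξ = (2πiξ)^(n-k) 𝓕 f⁽ᵏ⁾ ξ`. Hence `𝓕 f⁽ᵏ⁾` is dominated by the integrable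
`𝓕 f⁽ⁿ⁾` for `|ξ| ≥ 1`, and it is continuous, hence integrable, on `[-1, 1]`.
-/

open Complex Real

namespace MeasureTheory

variable {E : Type*} [NormedAddCommGroup E]

theorem Integrable.of_one_add_abs_pow_mul_norm {g : ℝ → E} {m : ℕ}
    (hg : AEStronglyMeasurable g)
    (hw : Integrable fun x : ℝ => (1 + |x|) ^ m * ‖g x‖) : Integrable g := by
  refine hw.mono hg (ae_of_all _ fun x => ?_)
  rw [Real.norm_of_nonneg (by positivity)]
  exact le_mul_of_one_le_left (norm_nonneg _) (one_le_pow₀ (by simp))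

theorem Integrable.of_abs_pow_mul_norm {h : ℝ → E} {m : ℕ} (hh : Continuous h)
    (hw : Integrable fun ξ : ℝ => |ξ| ^ m * ‖h ξ‖) : Integrable h := by
  have hnear : IntegrableOn h (Set.Icc (-1) 1) :=
    hh.continuousOn.integrableOn_compact isCompact_Icc
  have hfar : IntegrableOn h (Set.Icc (-1) 1)ᶜ := by
    refine hw.integrableOn.mono' hh.aestronglyMeasurable.restrict
      ((ae_restrict_iff' measurableSet_Icc.compl).2 (ae_of_all _ fun ξ hξ => ?_))
    have hξ : 1 ≤ |ξ| := by
      rw [Set.mem_compl_iff, Set.mem_Icc, ← abs_le] at hξ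
      exact (not_le.1 hξ).le
    exact le_mul_of_one_le_left (norm_nonneg _) (one_le_pow₀ hξ)
  simpa using hnear.union hfar

variable [NormedSpace ℂ E]

theorem Integrable.of_mul_pow_smul {h : ℝ → E} {c : ℂ} (hc0 : c ≠ 0) {m : ℕ}
    (hh : Continuous h) (hw : Integrable fun ξ : ℝ => (c * ξ) ^ m • h ξ) : Integrable h := by
  refine Integrable.of_abs_pow_mul_norm (m := m) hh ?_
  have hnorm : ∀ ξ : ℝ, ‖(c * ξ) ^ m • h ξ‖ = ‖c‖ ^ m * (|ξ| ^ m * ‖h ξ‖) := fun ξ => by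
    rw [norm_smul, norm_pow, norm_mul, Complex.norm_real, Real.norm_eq_abs, mul_pow, mul_assoc]
  have hcm : ‖c‖ ^ m ≠ 0 := pow_ne_zero m (norm_ne_zero_iff.2 hc0)
  simpa only [hnorm, ← mul_assoc, inv_mul_cancel₀ hcm, one_mul] using
    hw.norm.const_mul (‖c‖ ^ m)⁻¹

end MeasureTheory

variable {E : Type*} [NormedAddCommGroup E] [NormedSpace ℂ E]

theorem fourier_iteratedDeriv_add {f : ℝ → E} {m k : ℕ} (hf : ContDiff ℝ (m + k : ℕ) f)
    (hint : ∀ j ≤ m, Integrable (iteratedDeriv (j + k) f)) :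
    𝓕 (iteratedDeriv (m + k) f) =
      fun ξ : ℝ => (2 * π * I * ξ) ^ m • 𝓕 (iteratedDeriv k f) ξ := by
  have hcomp : ∀ j, iteratedDeriv j (iteratedDeriv k f) = iteratedDeriv (j + k) f := fun j => by
    simp only [iteratedDeriv_eq_iterate, ← Function.iterate_add_apply]
  rw [← hcomp]
  refine Real.fourier_iteratedDeriv (N := m) ?_
    (fun j hj => hcomp j ▸ hint j (by exact_mod_cast hj)) le_rfl
  rw [iteratedDeriv_eq_iterate]
  exact hf.iterate_deriv' m k

/-- If `f ∈ 𝔚ₙ`, then `f⁽ᵏ⁾ ∈ L¹(ℝ)` and the Fourier transform of `f⁽ᵏ⁾`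
is in `L¹(ℝ)` for every `k = 1, …, n`. -/
theorem deriv_and_fourier_integrable_of_memW (n : ℕ) (f : ℝ → ℂ) (hf : MemW n f) :
    ∀ k : ℕ, 1 ≤ k → k ≤ n →
      Integrable (iteratedDeriv k f) (volume : Measure ℝ) ∧
      Integrable (𝓕 (iteratedDeriv k f)) (volume : Measure ℝ) := by
  obtain ⟨hsmooth, -, -, hweight, hFn⟩ := hf
  have hint : ∀ j, 1 ≤ j → j ≤ n → Integrable (iteratedDeriv j f) := fun j hj1 hjn =>
    (hweight j hj1 hjn).of_one_add_abs_pow_mul_norm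
      (hsmooth.continuous_iteratedDeriv j (by exact_mod_cast hjn)).aestronglyMeasurable
  intro k hk1 hkn
  refine ⟨hint k hk1 hkn, ?_⟩
  obtain ⟨m, rfl⟩ := Nat.exists_eq_add_of_le' hkn
  have hrel := fourier_iteratedDeriv_add hsmooth fun j hj => hint (j + k) (by omega) (by omega)
  refine Integrable.of_mul_pow_smul (c := 2 * π * I) (by simp [pi_ne_zero]) ?_ (hrel ▸ hFn)
  exact VectorFourier.fourierIntegral_continuous Real.continuous_fourierChar
    continuous_inner (hint k hk1 hkn)
end

section
/- Let f ∈ 𝔚ₙ. Then for each k = 1, …, n−1 the function x ↦ f^{(k)}(x)(x−i)^k belongs to C₀(ℝ), i.e., it is continuous and tends to 0 at ±∞. -/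
open MeasureTheory Filter Asymptotics Complex Set Topology
open scoped FourierTransform

/-!
Write `g(x) = f⁽ᵏ⁾(x)(x−i)ᵏ`. Since `|x − i| ≤ 1 + |x|`, the weighted integrability of `f⁽ᵏ⁾`
and `f⁽ᵏ⁺¹⁾` shows that `g'` is integrable, so `g` has limits at `±∞`, and that `g(x)/(1 + |x|)`
is integrable, which forces both limits to vanish because `1/(1 + |x|)` is not integrable at
infinity.
-/

section VanishingAtInfinity

variable {E : Type*} [NormedAddCommGroup E] {g : ℝ → E}

theorem eq_zero_of_tendsto_atTop_of_integrable_norm_div {L : E} (hg : Tendsto g atTop (𝓝 L))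
    (hint : Integrable (fun x => ‖g x‖ / (1 + |x|))) : L = 0 := by
  by_contra hL
  have hLpos : 0 < ‖L‖ := norm_pos_iff.2 hL
  obtain ⟨M, hM⟩ :=
    eventually_atTop.1 (hg.norm.eventually (eventually_ge_nhds (half_lt_self hLpos)))
  refine not_integrableOn_Ioi_inv (a := max M 1) <|
    (hint.const_mul (4 / ‖L‖)).integrableOn.mono' measurable_inv.aestronglyMeasurable ?_
  filter_upwards [ae_restrict_mem measurableSet_Ioi] with x hx
  have hx1 : 1 < x := (le_max_right M 1).trans_lt hx
  have hgx : ‖L‖ / 2 ≤ ‖g x‖ := hM x ((le_max_left M 1).trans hx.le)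
  rw [Real.norm_eq_abs, abs_of_pos (by positivity), abs_of_pos (by linarith)]
  calc x⁻¹ = 4 / ‖L‖ * (‖L‖ / 2 / (2 * x)) := by field_simp; ring
    _ ≤ 4 / ‖L‖ * (‖g x‖ / (1 + x)) := by gcongr; linarith

theorem tendsto_cocompact_zero_of_integrable_deriv [NormedSpace ℝ E] [CompleteSpace E]
    {g' : ℝ → E} (hd : ∀ x, HasDerivAt g (g' x) x) (hg' : Integrable g')
    (hint : Integrable (fun x => ‖g x‖ / (1 + |x|))) : Tendsto g (cocompact ℝ) (𝓝 0) := by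
  have htop := tendsto_limUnder_of_hasDerivAt_of_integrableOn_Ioi (a := 0)
    (fun x _ => hd x) hg'.integrableOn
  have hbot := tendsto_limUnder_of_hasDerivAt_of_integrableOn_Iic (a := 0)
    (fun x _ => hd x) hg'.integrableOn
  have hint_neg : Integrable (fun x => ‖g (-x)‖ / (1 + |x|)) := by
    simpa only [abs_neg] using hint.comp_neg
  rw [cocompact_eq_atBot_atTop, tendsto_sup]
  exact ⟨eq_zero_of_tendsto_atTop_of_integrable_norm_div
      (hbot.comp tendsto_neg_atTop_atBot) hint_neg ▸ hbot,
    eq_zero_of_tendsto_atTop_of_integrable_norm_div htop hint ▸ htop⟩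

end VanishingAtInfinity

section Weight

lemma norm_ofReal_sub_I_le (x : ℝ) : ‖(x : ℂ) - I‖ ≤ 1 + |x| := by
  simpa [add_comm] using norm_sub_le (x : ℂ) I

lemma norm_ofReal_sub_I_pow_le (x : ℝ) (m : ℕ) : ‖((x : ℂ) - I) ^ m‖ ≤ (1 + |x|) ^ m := by
  rw [norm_pow]
  exact pow_le_pow_left₀ (norm_nonneg _) (norm_ofReal_sub_I_le x) m

variable {F : ℝ → ℂ} {m : ℕ}

lemma integrable_mul_ofReal_sub_I_pow (hF : Continuous F)
    (h : Integrable (fun x => (1 + |x|) ^ m * ‖F x‖)) :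
    Integrable (fun x => F x * ((x : ℂ) - I) ^ m) :=
  h.mono' (by fun_prop : Continuous _).aestronglyMeasurable <| .of_forall fun x => by
    rw [norm_mul, mul_comm]
    exact mul_le_mul_of_nonneg_right (norm_ofReal_sub_I_pow_le x m) (norm_nonneg _)

lemma integrable_norm_mul_ofReal_sub_I_pow_succ_div (hF : Continuous F)
    (h : Integrable (fun x => (1 + |x|) ^ m * ‖F x‖)) :
    Integrable (fun x => ‖F x * ((x : ℂ) - I) ^ (m + 1)‖ / (1 + |x|)) :=
  h.mono' (((by fun_prop : Continuous fun x : ℝ => F x * ((x : ℂ) - I) ^ (m + 1)).norm.div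
    (by fun_prop) fun x => by positivity).aestronglyMeasurable) <| .of_forall fun x => by
    have hx : 0 < 1 + |x| := by positivity
    rw [Real.norm_eq_abs, abs_of_nonneg (by positivity), div_le_iff₀ hx, norm_mul]
    calc ‖F x‖ * ‖((x : ℂ) - I) ^ (m + 1)‖ ≤ ‖F x‖ * (1 + |x|) ^ (m + 1) := by
          gcongr; exact norm_ofReal_sub_I_pow_le x (m + 1)
      _ = (1 + |x|) ^ m * ‖F x‖ * (1 + |x|) := by ring

lemma hasDerivAt_mul_ofReal_sub_I_pow_succ {F' : ℂ} {x : ℝ} (hF : HasDerivAt F F' x) (m : ℕ) :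
    HasDerivAt (fun x : ℝ => F x * ((x : ℂ) - I) ^ (m + 1))
      (F' * ((x : ℂ) - I) ^ (m + 1) + (m + 1) * (F x * ((x : ℂ) - I) ^ m)) x := by
  have hw : HasDerivAt (fun y : ℝ => ((y : ℂ) - I) ^ (m + 1))
      ((m + 1 : ℕ) * ((x : ℂ) - I) ^ m) x := by
    simpa using (((hasDerivAt_id (x : ℂ)).sub_const I).pow (m + 1)).comp_ofReal
  exact (hF.mul hw).congr_deriv (by push_cast; ring)

end Weight

/-- If `f ∈ 𝔚ₙ`, then for each `k = 1, …, n−1` the function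
`x ↦ f⁽ᵏ⁾(x)(x−i)ᵏ` belongs to `C₀(ℝ)`. -/
theorem deriv_mul_weight_c0_of_memW (n : ℕ) (f : ℝ → ℂ) (hf : MemW n f) :
    ∀ k : ℕ, 1 ≤ k → k ≤ n - 1 →
      Continuous (fun x : ℝ => iteratedDeriv k f x * ((x : ℂ) - Complex.I) ^ k) ∧
      Tendsto (fun x : ℝ => iteratedDeriv k f x * ((x : ℂ) - Complex.I) ^ k)
        (cocompact ℝ) (nhds 0) := by
  intro k hk1 hkn
  obtain ⟨m, rfl⟩ := Nat.exists_eq_add_of_le' hk1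
  have hf' : ContDiff ℝ (m + 2) f := hf.1.of_le (by exact_mod_cast (by omega : m + 2 ≤ n))
  have hc1 : Continuous (iteratedDeriv (m + 1) f) :=
    hf'.continuous_iteratedDeriv (m + 1) (by norm_cast; omega)
  have hc2 : Continuous (iteratedDeriv (m + 2) f) := hf'.continuous_iteratedDeriv' (m + 2)
  have hd (x : ℝ) : HasDerivAt (iteratedDeriv (m + 1) f) (iteratedDeriv (m + 2) f x) x := by
    rw [iteratedDeriv_succ (n := m + 1)]
    exact (hf'.differentiable_iteratedDeriv' (m + 1) x).hasDerivAt
  have hI1 : Integrable (fun x => (1 + |x|) ^ m * ‖iteratedDeriv (m + 1) f x‖) :=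
    hf.2.2.2.1 (m + 1) (by omega) (by omega)
  have hI2 : Integrable (fun x => (1 + |x|) ^ (m + 1) * ‖iteratedDeriv (m + 2) f x‖) :=
    hf.2.2.2.1 (m + 2) (by omega) (by omega)
  refine ⟨by fun_prop, tendsto_cocompact_zero_of_integrable_deriv
    (fun x => hasDerivAt_mul_ofReal_sub_I_pow_succ (hd x) m) ?_
    (integrable_norm_mul_ofReal_sub_I_pow_succ_div hc1 hI1)⟩
  exact (integrable_mul_ofReal_sub_I_pow hc2 hI2).add
    ((integrable_mul_ofReal_sub_I_pow hc1 hI1).const_mul _)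
end

section
/- Let n ≥ 1, f ∈ Cⁿ(ℝ), u(λ) = λ − i, and j ∈ {0,…,n}. Then for all λ₀,…,λₙ ∈ ℝ: f^{[n]}(λ₀,…,λₙ) = (fu)^{[n]}(λ₀,…,λₙ)·(λⱼ − i)^{−1} − f^{[n−1]}(λ₀,…,λ_{j−1},λ_{j+1},…,λₙ)·(λⱼ − i)^{−1}. -/
/-!
At distinct nodes the divided difference is the symmetric sum
`f^{[n]}(λ₀,…,λₙ) = ∑ₖ f(λₖ) / ∏_{m ≠ k} (λₖ - λₘ)`.
In this form the claim is a one-line computation: split `λₖ - i = (λₖ - λⱼ) + (λⱼ - i)`.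
The second summand contributes `(λⱼ - i) f^{[n]}(λ)`; in the first, the term `k = j` vanishes
and for `k ≠ j` the factor `λₖ - λⱼ` cancels against the denominator, which leaves exactly the
symmetric sum of `f` over the nodes without `λⱼ`.
-/

open Complex

/-- The `n`-th order divided difference of `f` at the points `l 0, …, l n`,
defined recursively; at pairwise distinct points this agrees with the usual
(continuously extended) divided difference. -/
noncomputable def divDiff (f : ℝ → ℂ) : ℕ → (ℕ → ℝ) → ℂ
  | 0, l => f (l 0)
  | (n + 1), l =>
      (divDiff f n (Function.update l n (l (n + 1))) - divDiff f n l) /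
        ((l (n + 1) : ℂ) - (l n : ℂ))

/-- The tuple `l` with its `j`-th entry removed. -/
def removeIdx (l : ℕ → ℝ) (j : ℕ) : ℕ → ℝ := fun m => if m < j then l m else l (m + 1)

open Finset

lemma Set.InjOn.ofReal_sub_ne_zero {ι : Type*} {l : ι → ℝ} {s : Set ι} (hl : Set.InjOn l s)
    {k m : ι} (hk : k ∈ s) (hm : m ∈ s) (hkm : k ≠ m) : (l k : ℂ) - l m ≠ 0 :=
  sub_ne_zero.2 <| ofReal_injective.ne (hl.ne hk hm hkm)

lemma prod_ofReal_sub_ne_zero {ι : Type*} {l : ι → ℝ} {s t : Finset ι} {k : ι}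
    (hl : Set.InjOn l t) (hk : k ∈ t) (hst : s ⊆ t) (hks : k ∉ s) :
    ∏ m ∈ s, ((l k : ℂ) - l m) ≠ 0 :=
  prod_ne_zero_iff.2 fun _ hm =>
    hl.ofReal_sub_ne_zero hk (hst hm) (ne_of_mem_of_not_mem hm hks).symm

noncomputable def divDiffOn {ι : Type*} [DecidableEq ι] (f : ℝ → ℂ) (l : ι → ℝ) (s : Finset ι) :
    ℂ :=
  ∑ k ∈ s, f (l k) / ∏ m ∈ s.erase k, ((l k : ℂ) - l m)

section divDiffOn

variable {ι : Type*} [DecidableEq ι] (f : ℝ → ℂ) (l : ι → ℝ)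

lemma divDiffOn_singleton (k : ι) : divDiffOn f l {k} = f (l k) := by
  simp [divDiffOn]

lemma divDiffOn_comp {κ : Type*} [DecidableEq κ] (σ : κ → ι) {s : Finset κ}
    (hσ : Set.InjOn σ s) : divDiffOn f (l ∘ σ) s = divDiffOn f l (s.image σ) := by
  rw [divDiffOn, divDiffOn, sum_image hσ]
  refine sum_congr rfl fun k hk => ?_
  have herase : (s.image σ).erase (σ k) = (s.erase k).image σ := by
    rw [erase_eq, erase_eq, image_sdiff_of_injOn hσ (singleton_subset_iff.2 hk), image_singleton]
  rw [herase, prod_image (hσ.mono (by simp))]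
  rfl

lemma divDiffOn_insert_insert {s : Finset ι} {a b : ι} (hab : a ≠ b) (ha : a ∉ s) (hb : b ∉ s)
    (hl : Set.InjOn l (insert a (insert b s) : Finset ι)) :
    divDiffOn f l (insert a (insert b s)) =
      (divDiffOn f l (insert b s) - divDiffOn f l (insert a s)) / ((l b : ℂ) - l a) := by
  have hab' : (l a : ℂ) - l b ≠ 0 := hl.ofReal_sub_ne_zero (by simp) (by simp) hab
  have hba' : (l b : ℂ) - l a ≠ 0 := hl.ofReal_sub_ne_zero (by simp) (by simp) hab.symm
  have hPa : ∏ m ∈ s, ((l a : ℂ) - l m) ≠ 0 :=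
    prod_ofReal_sub_ne_zero hl (by simp) (by grind) ha
  have hPb : ∏ m ∈ s, ((l b : ℂ) - l m) ≠ 0 :=
    prod_ofReal_sub_ne_zero hl (by simp) (by grind) hb
  have hterm : ∀ k ∈ s, f (l k) / ∏ m ∈ (insert a (insert b s)).erase k, ((l k : ℂ) - l m) =
      (f (l k) / ∏ m ∈ (insert b s).erase k, ((l k : ℂ) - l m) -
        f (l k) / ∏ m ∈ (insert a s).erase k, ((l k : ℂ) - l m)) / ((l b : ℂ) - l a) := by
    intro k hk
    have hka : k ≠ a := ne_of_mem_of_not_mem hk ha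
    have hkb : k ≠ b := ne_of_mem_of_not_mem hk hb
    have hP := prod_ofReal_sub_ne_zero hl (by simp [hk]) (by grind) (notMem_erase k s)
    have hka' := hl.ofReal_sub_ne_zero (by simp [hk]) (by simp) hka
    have hkb' := hl.ofReal_sub_ne_zero (by simp [hk]) (by simp) hkb
    simp only [erase_insert_of_ne hka.symm, erase_insert_of_ne hkb.symm]
    rw [prod_insert (by simp [hab, ha]), prod_insert (by simp [hb]), prod_insert (by simp [ha])]
    field_simp
    ring
  rw [divDiffOn, sum_insert (by simp [hab, ha]), sum_insert hb, sum_congr rfl hterm, ← sum_div,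
    sum_sub_distrib, divDiffOn, divDiffOn, sum_insert hb, sum_insert ha,
    erase_insert (by simp [hab, ha]), erase_insert_of_ne hab, erase_insert hb, erase_insert ha,
    prod_insert hb, prod_insert ha]
  field_simp
  ring

lemma divDiffOn_mul_sub (c : ℂ) {s : Finset ι} {j : ι} (hj : j ∈ s) (hl : Set.InjOn l s) :
    divDiffOn (fun x => f x * ((x : ℂ) - c)) l s =
      divDiffOn f l s * ((l j : ℂ) - c) + divDiffOn f l (s.erase j) := by
  have hcancel : ∀ k ∈ s.erase j,
      f (l k) * ((l k : ℂ) - l j) / ∏ m ∈ s.erase k, ((l k : ℂ) - l m) =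
        f (l k) / ∏ m ∈ (s.erase j).erase k, ((l k : ℂ) - l m) := by
    intro k hk
    rw [← mul_prod_erase (s.erase k) _ (mem_erase.2 ⟨(ne_of_mem_erase hk).symm, hj⟩),
      erase_right_comm, mul_comm ((l k : ℂ) - l j), mul_div_mul_right _ _
        (hl.ofReal_sub_ne_zero (mem_of_mem_erase hk) hj (ne_of_mem_erase hk))]
  calc divDiffOn (fun x => f x * ((x : ℂ) - c)) l s
      = divDiffOn f l s * ((l j : ℂ) - c) +
          ∑ k ∈ s, f (l k) * ((l k : ℂ) - l j) / ∏ m ∈ s.erase k, ((l k : ℂ) - l m) := by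
        rw [divDiffOn, divDiffOn, sum_mul, ← sum_add_distrib]
        refine sum_congr rfl fun k _ => ?_
        ring
    _ = divDiffOn f l s * ((l j : ℂ) - c) + divDiffOn f l (s.erase j) := by
        rw [← sum_erase s (a := j) (by simp), sum_congr rfl hcancel]
        rfl

end divDiffOn

theorem divDiff_eq_divDiffOn (f : ℝ → ℂ) (n : ℕ) (l : ℕ → ℝ)
    (hl : Set.InjOn l (range (n + 1) : Finset ℕ)) :
    divDiff f n l = divDiffOn f l (range (n + 1)) := by
  induction n generalizing l with
  | zero => rw [range_one, divDiffOn_singleton]; rfl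
  | succ n ih =>
    set τ : ℕ → ℕ := Function.update id n (n + 1)
    have hupdate : Function.update l n (l (n + 1)) = l ∘ τ :=
      (Function.comp_update l id n (n + 1)).symm
    have hτ : Set.InjOn τ (range (n + 1) : Finset ℕ) := by
      intro m hm m' hm' h
      simp only [coe_range, Set.mem_Iio] at hm hm'
      simp only [τ, Function.update_apply, id] at h
      split_ifs at h <;> omega
    have himage : (range (n + 1)).image τ = insert (n + 1) (range n) := by
      ext m
      simp only [τ, mem_image, mem_range, mem_insert, Function.update_apply, id]
      constructor
      · rintro ⟨m', hm', rfl⟩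
        split_ifs <;> omega
      · rintro (rfl | hm)
        · exact ⟨n, by omega, by simp⟩
        · exact ⟨m, by omega, by simp [hm.ne]⟩
    have hlτ : Set.InjOn (l ∘ τ) (range (n + 1) : Finset ℕ) := by
      refine hl.comp hτ fun m hm => ?_
      have := mem_image_of_mem τ hm
      rw [himage] at this
      simp only [mem_insert, mem_range, coe_range, Set.mem_Iio] at this ⊢
      omega
    have hrange : range (n + 1 + 1) = insert n (insert (n + 1) (range n)) := by
      rw [range_add_one, range_add_one, insert_comm]
    rw [divDiff, hupdate, ih _ hlτ, ih _ (hl.mono (by simp)), divDiffOn_comp _ _ _ hτ, himage,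
      hrange, divDiffOn_insert_insert f l (by omega) (by simp) (by simp) (hrange ▸ hl),
      range_add_one]

lemma image_range_skip {n j : ℕ} (hj : j ≤ n) :
    (range n).image (fun m => if m < j then m else m + 1) = (range (n + 1)).erase j := by
  ext m
  simp only [mem_image, mem_range, mem_erase]
  constructor
  · rintro ⟨m', hm', rfl⟩
    split_ifs <;> omega
  · rintro ⟨hmj, hm⟩
    rcases lt_or_gt_of_ne hmj with h | h
    · exact ⟨m, by omega, if_pos h⟩
    · exact ⟨m - 1, by omega, by rw [if_neg (by omega)]; omega⟩

lemma divDiff_removeIdx (f : ℝ → ℂ) {n j : ℕ} (hj : j ≤ n + 1) {l : ℕ → ℝ}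
    (hl : Set.InjOn l (range (n + 2) : Finset ℕ)) :
    divDiff f n (removeIdx l j) = divDiffOn f l ((range (n + 2)).erase j) := by
  set σ : ℕ → ℕ := fun m => if m < j then m else m + 1
  have hσ : σ.Injective := fun m m' h => by
    simp only [σ] at h
    split_ifs at h <;> omega
  have hcomp : removeIdx l j = l ∘ σ := funext fun m => by
    simp only [removeIdx, σ, Function.comp]
    split_ifs <;> rfl
  have hmaps : Set.MapsTo σ (range (n + 1) : Finset ℕ) (range (n + 2) : Finset ℕ) :=
    fun m hm => by
      simp only [σ, coe_range, Set.mem_Iio] at hm ⊢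
      split_ifs <;> omega
  rw [hcomp, divDiff_eq_divDiffOn f n _ (hl.comp hσ.injOn hmaps), divDiffOn_comp _ _ _ hσ.injOn,
    image_range_skip hj]

theorem divDiff_remove_weight_general (n : ℕ) (hn : 1 ≤ n) (f : ℝ → ℂ)
    (j : ℕ) (hj : j ≤ n)
    (l : ℕ → ℝ) (hl : ∀ i i' : ℕ, i ≤ n → i' ≤ n → i ≠ i' → l i ≠ l i') :
    divDiff f n l
      = divDiff (fun x : ℝ => f x * ((x : ℂ) - Complex.I)) n l * ((l j : ℂ) - Complex.I)⁻¹
        - divDiff f (n - 1) (removeIdx l j) * ((l j : ℂ) - Complex.I)⁻¹ := by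
  obtain ⟨m, rfl⟩ : ∃ m, n = m + 1 := ⟨n - 1, by omega⟩
  have hinj : Set.InjOn l (range (m + 2) : Finset ℕ) := fun i hi i' hi' h =>
    by_contra fun hne => hl i i' (by simp at hi; omega) (by simp at hi'; omega) hne h
  have hu : (l j : ℂ) - I ≠ 0 := fun h => by simpa using congrArg im h
  rw [Nat.add_sub_cancel, divDiff_eq_divDiffOn f _ l hinj, divDiff_eq_divDiffOn _ _ l hinj,
    divDiff_removeIdx f hj hinj, divDiffOn_mul_sub f l I (j := j) (by simp; omega) hinj]
  field_simp
  ring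

/-- For `u(λ) = λ − i` and any `j ∈ {0,…,n}`:
`f^{[n]}(λ₀,…,λₙ) = (fu)^{[n]}(λ₀,…,λₙ)·(λⱼ−i)⁻¹ −
f^{[n−1]}(λ₀,…,λ_{j−1},λ_{j+1},…,λₙ)·(λⱼ−i)⁻¹`, for pairwise distinct points. -/
theorem divDiff_remove_weight (n : ℕ) (hn : 1 ≤ n) (f : ℝ → ℂ) (hf : ContDiff ℝ n f)
    (j : ℕ) (hj : j ≤ n)
    (l : ℕ → ℝ) (hl : ∀ i i' : ℕ, i ≤ n → i' ≤ n → i ≠ i' → l i ≠ l i') :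
    divDiff f n l
      = divDiff (fun x : ℝ => f x * ((x : ℂ) - Complex.I)) n l * ((l j : ℂ) - Complex.I)⁻¹
        - divDiff f (n - 1) (removeIdx l j) * ((l j : ℂ) - Complex.I)⁻¹ :=
  divDiff_remove_weight_general n hn f j hj l hl
end

section
/- Let n ∈ ℕ and f ∈ Cⁿ(ℝ) with the Fourier transform of f^{(n)} integrable. Then the n-th divided difference admits the representation f^{[n]}(λ₀,…,λₙ) = ∫_{Δₙ} ∫_ℝ e^{i t s₀ λ₀} ⋯ e^{i t sₙ λₙ} \widehat{f^{(n)}}(t) dt dσ(s), where Δₙ = {s ∈ ℝ_{≥0}^{n+1} : s₀ + … + sₙ = 1} is the n-simplex with Lebesgue surface measure σ. -/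
open MeasureTheory Complex

/-!
The Hermite–Genocchi formula `f^{[n]}(λ₀,…,λₙ) = ∫_{Δₙ} f⁽ⁿ⁾(s₀λ₀ + ⋯ + sₙλₙ) dσ(s)` is proved by
induction on `n`. Slicing `Δₙ₊₁` along its last coordinate and integrating `f⁽ⁿ⁺¹⁾` along the
resulting segment (fundamental theorem of calculus) yields the divided-difference recursion, except
that it is the node `λ₀` that gets replaced rather than `λₙ`; this is repaired by relabelling the
nodes, which does not change the simplex integral because the affine reflection of `Δₙ` exchanging
two vertices has Jacobian `±1`. The theorem follows by inserting the Fourier representation of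
`f⁽ⁿ⁾` into the integrand.
-/

open Set Function

/-- The simplex `Δₙ` in the coordinates `(s₁, …, sₙ)`, with `s₀ = 1 - ∑ i, s i`; Lebesgue measure on
it is the surface measure `σ` of the paper (`σ(Δₙ) = 1/n!`). -/
def cornerSimplex (n : ℕ) : Set (Fin n → ℝ) := {s | (∀ i, 0 ≤ s i) ∧ ∑ i, s i ≤ 1}

def simplexPoint (n : ℕ) (l : ℕ → ℝ) (s : Fin n → ℝ) : ℝ :=
  (1 - ∑ i, s i) * l 0 + ∑ i : Fin n, s i * l (i + 1)

theorem isClosed_cornerSimplex (n : ℕ) : IsClosed (cornerSimplex n) :=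
  (isClosed_Ici (a := (0 : Fin n → ℝ))).inter
    (isClosed_le (f := fun s : Fin n → ℝ => ∑ i, s i) (by fun_prop) continuous_const)

theorem measurableSet_cornerSimplex (n : ℕ) : MeasurableSet (cornerSimplex n) :=
  (isClosed_cornerSimplex n).measurableSet

theorem isCompact_cornerSimplex (n : ℕ) : IsCompact (cornerSimplex n) :=
  isCompact_Icc.of_isClosed_subset (isClosed_cornerSimplex n) fun _ ⟨hs₀, hs₁⟩ =>
    ⟨hs₀, fun i => (Finset.single_le_sum (fun j _ => hs₀ j) (Finset.mem_univ i)).trans hs₁⟩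

theorem snoc_mem_cornerSimplex_iff {n : ℕ} {s : Fin n → ℝ} {t : ℝ} :
    Fin.snoc s t ∈ cornerSimplex (n + 1) ↔ s ∈ cornerSimplex n ∧ t ∈ Icc 0 (1 - ∑ i, s i) := by
  simp only [cornerSimplex, mem_ofPred_eq, Fin.forall_fin_succ', Fin.snoc_castSucc, Fin.snoc_last,
    Fin.sum_univ_castSucc, mem_Icc]
  constructor
  · rintro ⟨⟨hs, ht⟩, hsum⟩
    exact ⟨⟨hs, by linarith⟩, ht, by linarith⟩
  · rintro ⟨⟨hs, -⟩, ht, hsum⟩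
    exact ⟨⟨hs, ht⟩, by linarith⟩

theorem continuous_simplexPoint (n : ℕ) (l : ℕ → ℝ) : Continuous (simplexPoint n l) := by
  unfold simplexPoint
  fun_prop

theorem integrableOn_cornerSimplex_comp_simplexPoint {E : Type*} [NormedAddCommGroup E]
    {G : ℝ → E} (hG : Continuous G) (n : ℕ) (l : ℕ → ℝ) :
    IntegrableOn (fun s => G (simplexPoint n l s)) (cornerSimplex n) :=
  (hG.comp (continuous_simplexPoint n l)).continuousOn.integrableOn_compact
    (isCompact_cornerSimplex n)

theorem simplexPoint_snoc {n : ℕ} (l : ℕ → ℝ) (s : Fin n → ℝ) (t : ℝ) :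
    simplexPoint (n + 1) l (Fin.snoc s t) = (l (n + 1) - l 0) * t + simplexPoint n l s := by
  simp only [simplexPoint, Fin.sum_univ_castSucc, Fin.snoc_castSucc, Fin.snoc_last,
    Fin.val_castSucc, Fin.val_last]
  ring

theorem simplexPoint_update_zero {n : ℕ} (l : ℕ → ℝ) (v : ℝ) (s : Fin n → ℝ) :
    simplexPoint n (update l 0 v) s = (v - l 0) * (1 - ∑ i, s i) + simplexPoint n l s := by
  simp only [simplexPoint, update_self, update_of_ne (Nat.succ_ne_zero _)]
  ring

theorem integral_eq_integral_integral_snoc {E : Type*} [NormedAddCommGroup E] [NormedSpace ℝ E]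
    {n : ℕ} {φ : (Fin (n + 1) → ℝ) → E} (hφ : Integrable φ) :
    ∫ x, φ x = ∫ s, ∫ t, φ (Fin.snoc s t) := by
  set e := (MeasurableEquiv.piFinSuccAbove (fun _ : Fin (n + 1) => ℝ) (Fin.last n)).symm
  have he : MeasurePreserving e := (volume_preserving_piFinSuccAbove _ _).symm
  have he_apply : ∀ t s, e (t, s) = Fin.snoc s t := fun t s => by
    simp [e, MeasurableEquiv.piFinSuccAbove, Fin.snocEquiv]
  have hφe : Integrable (fun p => φ (e p)) (volume.prod volume) :=
    (he.integrable_comp_emb e.measurableEmbedding).2 hφ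
  rw [← he.integral_comp', Measure.volume_eq_prod, integral_prod_symm _ hφe]
  simp only [he_apply]

theorem setIntegral_cornerSimplex_succ {E : Type*} [NormedAddCommGroup E] [NormedSpace ℝ E]
    {n : ℕ} {H : (Fin (n + 1) → ℝ) → E} (hH : IntegrableOn H (cornerSimplex (n + 1))) :
    ∫ x in cornerSimplex (n + 1), H x
      = ∫ s in cornerSimplex n, ∫ t in Icc 0 (1 - ∑ i, s i), H (Fin.snoc s t) := by
  have hslice : ∀ s t, (cornerSimplex (n + 1)).indicator H (Fin.snoc s t)
      = (cornerSimplex n).indicator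
          (fun s => (Icc 0 (1 - ∑ i, s i)).indicator (fun t => H (Fin.snoc s t)) t) s := by
    intro s t
    classical
    simp only [indicator_apply, snoc_mem_cornerSimplex_iff, ite_and]
  rw [← integral_indicator (measurableSet_cornerSimplex _),
    integral_eq_integral_integral_snoc (hH.integrable_indicator (measurableSet_cornerSimplex _)),
    ← integral_indicator (measurableSet_cornerSimplex n)]
  refine integral_congr_ae (Filter.Eventually.of_forall fun s => ?_)
  by_cases hs : s ∈ cornerSimplex n <;>
    simp [hslice, hs, integral_indicator measurableSet_Icc]

theorem integral_Icc_comp_mul_add_of_hasDerivAt {E : Type*} [NormedAddCommGroup E]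
    [NormedSpace ℝ E] [CompleteSpace E] {F F' : ℝ → E} (hF : ∀ x, HasDerivAt F (F' x) x)
    (hF' : Continuous F')
    {a : ℝ} (ha : a ≠ 0) (c : ℝ) {b : ℝ} (hb : 0 ≤ b) :
    ∫ t in Icc 0 b, F' (a * t + c) = a⁻¹ • (F (a * b + c) - F c) := by
  rw [integral_Icc_eq_integral_Ioc, ← intervalIntegral.integral_of_le hb,
    intervalIntegral.integral_comp_mul_add F' ha, mul_zero, zero_add,
    intervalIntegral.integral_eq_sub_of_hasDerivAt (fun x _ => hF x) (hF'.intervalIntegrable _ _)]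

theorem Finset.sum_univ_update {ι M : Type*} [Fintype ι] [DecidableEq ι] [AddCommGroup M]
    (s : ι → M) (j : ι) (v : M) : ∑ i, update s j v i = ∑ i, s i - s j + v := by
  rw [Finset.sum_update_of_mem (Finset.mem_univ j),
    Finset.sum_eq_add_sum_sdiff_singleton_of_mem (Finset.mem_univ j) s]
  abel

section simplexSwap

variable {n : ℕ} (j : Fin n)

def simplexSwapLinear : (Fin n → ℝ) →ₗ[ℝ] Fin n → ℝ where
  toFun v := update v j (-∑ i, v i)
  map_add' v w := by
    ext i
    rcases eq_or_ne i j with rfl | h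
    · simp [Finset.sum_add_distrib, add_comm]
    · simp [h]
  map_smul' c v := by
    ext i
    rcases eq_or_ne i j with rfl | h
    · simp [Finset.mul_sum]
    · simp [h]

theorem simplexSwapLinear_apply (v : Fin n → ℝ) :
    simplexSwapLinear j v = update v j (-∑ i, v i) := rfl

theorem abs_det_simplexSwapLinear : |LinearMap.det (simplexSwapLinear j)| = 1 := by
  have hinv : simplexSwapLinear j ∘ₗ simplexSwapLinear j = LinearMap.id := by
    refine LinearMap.ext fun v => ?_
    simp [simplexSwapLinear_apply, Finset.sum_univ_update]
  have hsq : LinearMap.det (simplexSwapLinear j) * LinearMap.det (simplexSwapLinear j) = 1 := by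
    rw [← LinearMap.det_comp, hinv, LinearMap.det_id]
  rcases mul_self_eq_one_iff.1 hsq with h | h <;> simp [h]

/-- The affine reflection of `cornerSimplex n` exchanging its vertices `0` and `Pi.single j 1`,
i.e. the barycentric weights `1 - ∑ i, s i` and `s j`. -/
def simplexSwap (s : Fin n → ℝ) : Fin n → ℝ :=
  simplexSwapLinear j s + Pi.single j 1

theorem simplexSwap_apply (s : Fin n → ℝ) : simplexSwap j s = update s j (1 - ∑ i, s i) := by
  ext i
  rcases eq_or_ne i j with rfl | h
  · simp [simplexSwap, simplexSwapLinear_apply]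
    ring
  · simp [simplexSwap, simplexSwapLinear_apply, h]

theorem sum_simplexSwap (s : Fin n → ℝ) : ∑ i, simplexSwap j s i = 1 - s j := by
  rw [simplexSwap_apply, Finset.sum_univ_update]
  ring

theorem simplexSwap_involutive : Involutive (simplexSwap j) := fun s => by
  rw [simplexSwap_apply j (simplexSwap j s), sum_simplexSwap, simplexSwap_apply, update_idem]
  simp

theorem mapsTo_simplexSwap : MapsTo (simplexSwap j) (cornerSimplex n) (cornerSimplex n) := by
  rintro s ⟨hs₀, hs₁⟩
  refine ⟨fun i => ?_, by rw [sum_simplexSwap]; linarith [hs₀ j]⟩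
  rcases eq_or_ne i j with rfl | h
  · simpa [simplexSwap_apply] using hs₁
  · simpa [simplexSwap_apply, h] using hs₀ i

theorem image_simplexSwap : simplexSwap j '' cornerSimplex n = cornerSimplex n :=
  (mapsTo_simplexSwap j).image_subset.antisymm fun s hs =>
    ⟨simplexSwap j s, mapsTo_simplexSwap j hs, simplexSwap_involutive j s⟩

theorem hasFDerivAt_simplexSwap (s : Fin n → ℝ) :
    HasFDerivAt (simplexSwap j) (simplexSwapLinear j).toContinuousLinearMap s :=
  (simplexSwapLinear j).toContinuousLinearMap.hasFDerivAt.add_const _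

theorem simplexPoint_simplexSwap (l : ℕ → ℝ) (s : Fin n → ℝ) :
    simplexPoint n l (simplexSwap j s) = simplexPoint n (l ∘ Equiv.swap 0 (j + 1 : ℕ)) s := by
  have hl : ∀ i : Fin n,
      l (Equiv.swap 0 (j + 1 : ℕ) (i + 1)) = update (fun i : Fin n => l (i + 1)) j (l 0) i := by
    intro i
    rcases eq_or_ne i j with rfl | h
    · simp
    · rw [update_of_ne h, Equiv.swap_apply_of_ne_of_ne (by omega) (by omega)]
  simp only [simplexPoint, simplexSwap_apply, comp_apply, hl, Fintype.sum_eq_add_sum_compl j,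
    Equiv.swap_apply_left, update_apply, if_pos, ite_mul, mul_ite,
    Finset.sum_ite_of_false (s := ({j}ᶜ : Finset (Fin n))) (p := (· = j))
      (fun i hi => by simpa using hi)]
  ring

end simplexSwap

theorem setIntegral_simplexPoint_comp_swap {E : Type*} [NormedAddCommGroup E] [NormedSpace ℝ E]
    (h : ℝ → E) {n k : ℕ} (hk : k ≤ n) (l : ℕ → ℝ) :
    ∫ s in cornerSimplex n, h (simplexPoint n (l ∘ Equiv.swap 0 k) s)
      = ∫ s in cornerSimplex n, h (simplexPoint n l s) := by
  rcases k with _ | k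
  · simp
  let j : Fin n := ⟨k, hk⟩
  have hderiv : ∀ s ∈ cornerSimplex n, HasFDerivWithinAt (simplexSwap j)
      (simplexSwapLinear j).toContinuousLinearMap (cornerSimplex n) s :=
    fun s _ => (hasFDerivAt_simplexSwap j s).hasFDerivWithinAt
  have hdet : |(simplexSwapLinear j).toContinuousLinearMap.det| = 1 := by
    rw [LinearMap.det_toContinuousLinearMap, abs_det_simplexSwapLinear]
  calc ∫ s in cornerSimplex n, h (simplexPoint n (l ∘ Equiv.swap 0 (j + 1 : ℕ)) s)
      = ∫ s in cornerSimplex n, |(simplexSwapLinear j).toContinuousLinearMap.det| •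
          h (simplexPoint n l (simplexSwap j s)) := by
        simp only [hdet, one_smul, simplexPoint_simplexSwap]
    _ = ∫ s in simplexSwap j '' cornerSimplex n, h (simplexPoint n l s) :=
        (integral_image_eq_integral_abs_det_fderiv_smul volume (measurableSet_cornerSimplex n)
          hderiv (simplexSwap_involutive j).injective.injOn fun s => h (simplexPoint n l s)).symm
    _ = ∫ s in cornerSimplex n, h (simplexPoint n l s) := by rw [image_simplexSwap]

theorem setIntegral_simplexPoint_succ {F F' : ℝ → ℂ} (hF : ∀ x, HasDerivAt F (F' x) x)
    (hF' : Continuous F') {n : ℕ} {l : ℕ → ℝ} (hl : l (n + 1) ≠ l 0) :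
    ∫ s in cornerSimplex (n + 1), F' (simplexPoint (n + 1) l s)
      = ((∫ s in cornerSimplex n, F (simplexPoint n (update l 0 (l (n + 1))) s))
          - ∫ s in cornerSimplex n, F (simplexPoint n l s)) / (l (n + 1) - l 0 : ℂ) := by
  have hFc : Continuous F := continuous_iff_continuousAt.2 fun x => (hF x).continuousAt
  rw [setIntegral_cornerSimplex_succ (integrableOn_cornerSimplex_comp_simplexPoint hF' _ l),
    ← integral_sub (integrableOn_cornerSimplex_comp_simplexPoint hFc _ _)
      (integrableOn_cornerSimplex_comp_simplexPoint hFc _ l), ← integral_div]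
  refine setIntegral_congr_fun (measurableSet_cornerSimplex n) fun s hs => ?_
  simp only [simplexPoint_snoc, simplexPoint_update_zero]
  rw [integral_Icc_comp_mul_add_of_hasDerivAt hF hF' (sub_ne_zero.2 hl) _ (sub_nonneg.2 hs.2),
    Complex.real_smul, Complex.ofReal_inv, Complex.ofReal_sub, div_eq_inv_mul]

theorem injOn_update_of_injOn_succ {l : ℕ → ℝ} {n : ℕ} (hl : InjOn l (Iic (n + 1))) :
    InjOn (update l n (l (n + 1))) (Iic n) := by
  intro i hi j hj hij
  simp only [mem_Iic] at hi hj
  simp only [update_apply] at hij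
  split_ifs at hij with hin hjn hjn
  · omega
  · have := hl (by simp) (by simp; omega) hij
    omega
  · have := hl (by simp; omega) (by simp) hij
    omega
  · exact hl (by simp; omega) (by simp; omega) hij

theorem divDiff_eq_setIntegral_iteratedDeriv {n : ℕ} {f : ℝ → ℂ} (hf : ContDiff ℝ n f)
    {l : ℕ → ℝ} (hl : InjOn l (Iic n)) :
    divDiff f n l = ∫ s in cornerSimplex n, iteratedDeriv n f (simplexPoint n l s) := by
  induction n generalizing l with
  | zero => simp [divDiff, cornerSimplex, simplexPoint, volume_pi, measureReal_def]
  | succ n ih =>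
    have hfn : ContDiff ℝ n f := hf.of_le (by norm_cast; omega)
    have hderiv : ∀ x, HasDerivAt (iteratedDeriv n f) (iteratedDeriv (n + 1) f x) x := fun x => by
      rw [iteratedDeriv_succ]
      exact (hf.differentiable_iteratedDeriv' n x).hasDerivAt
    have hne : l (n + 1) ≠ l n := hl.ne (by simp) (by simp) (by omega)
    have hswap : Equiv.swap 0 n (n + 1) = n + 1 :=
      Equiv.swap_apply_of_ne_of_ne (by omega) (by omega)
    have hupd : update (l ∘ Equiv.swap 0 n) 0 (l (n + 1))
        = update l n (l (n + 1)) ∘ Equiv.swap 0 n := by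
      rw [update_comp_equiv]
      simp
    -- Slicing replaces the node `l 0`, the recursion of `divDiff` the node `l n`: relabel first.
    rw [divDiff, ih hfn (injOn_update_of_injOn_succ hl),
      ih hfn (hl.mono (Iic_subset_Iic.2 n.le_succ)),
      ← setIntegral_simplexPoint_comp_swap _ n.le_succ l,
      setIntegral_simplexPoint_succ hderiv (hf.continuous_iteratedDeriv' _)
        (by simpa [hswap] using hne)]
    simp only [comp_apply, hswap, Equiv.swap_apply_left]
    rw [hupd, setIntegral_simplexPoint_comp_swap _ le_rfl,
      setIntegral_simplexPoint_comp_swap _ le_rfl]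

theorem divDiff_integral_repr_general (n : ℕ) (f : ℝ → ℂ) (hf : ContDiff ℝ n f)
    (g : ℝ → ℂ)
    (hrepr : ∀ x : ℝ, iteratedDeriv n f x = ∫ t : ℝ, Complex.exp (Complex.I * t * x) * g t)
    (l : ℕ → ℝ) (hl : ∀ i j : ℕ, i ≤ n → j ≤ n → i ≠ j → l i ≠ l j) :
    divDiff f n l
      = ∫ s in {s : Fin n → ℝ | (∀ i, 0 ≤ s i) ∧ (∑ i, s i) ≤ 1},
          ∫ t : ℝ,
            Complex.exp (Complex.I * t *
              (((1 - ∑ i, s i) * l 0 + ∑ i : Fin n, s i * l (i.1 + 1) : ℝ) : ℂ)) * g t := by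
  have hinj : InjOn l (Iic n) := fun i hi j hj hij => by_contra fun hne => hl i j hi hj hne hij
  rw [divDiff_eq_setIntegral_iteratedDeriv hf hinj]
  exact setIntegral_congr_fun (measurableSet_cornerSimplex n) fun s _ => hrepr _

/-- If `f ∈ Cⁿ(ℝ)` and `f⁽ⁿ⁾(x) = ∫ e^{itx} g(t) dt` with `g = \widehat{f⁽ⁿ⁾}`
integrable, then
`f^{[n]}(λ₀,…,λₙ) = ∫_{Δₙ} ∫_ℝ e^{its₀λ₀} ⋯ e^{itsₙλₙ} g(t) dt dσ(s)`,
where the `n`-simplex `Δₙ = {s ∈ ℝ_{≥0}^{n+1} : ∑ sᵢ = 1}` is parametrized by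
`(s₁,…,sₙ)` with `s₀ = 1 − s₁ − ⋯ − sₙ`, and `σ` is its Lebesgue surface
measure (of total mass `1/n!`). -/
theorem divDiff_integral_repr (n : ℕ) (f : ℝ → ℂ) (hf : ContDiff ℝ n f)
    (g : ℝ → ℂ) (hg : Integrable g (volume : Measure ℝ))
    (hrepr : ∀ x : ℝ, iteratedDeriv n f x = ∫ t : ℝ, Complex.exp (Complex.I * t * x) * g t)
    (l : ℕ → ℝ) (hl : ∀ i j : ℕ, i ≤ n → j ≤ n → i ≠ j → l i ≠ l j) :
    divDiff f n l
      = ∫ s in {s : Fin n → ℝ | (∀ i, 0 ≤ s i) ∧ (∑ i, s i) ≤ 1},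
          ∫ t : ℝ,
            Complex.exp (Complex.I * t *
              (((1 - ∑ i, s i) * l 0 + ∑ i : Fin n, s i * l (i.1 + 1) : ℝ) : ℂ)) * g t :=
  divDiff_integral_repr_general n f hf g hrepr l hl
end
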